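/- Assume H is continuous, ℓ¹-Lipschitz in p with constant L, Lipschitz in u with some constant L_u, and nondecreasing in u; assume θ > 0 and β ≥ L/2. Then the Lax-Friedrichs scheme has a solution U, and it satisfies the uniform stability bound |U_α| ≤ max( max over boundary indices β' of |g(x_{β'})| , θ^{-1}·max over interior indices α' of |H(0, 0, x_{α'})| ) for every grid index α, where 0 denotes the zero vector of ℝ^d. -/
import Mathlib

open Finset

/-- `α` is an interior index: `0 < α i < J i` for all `i`. -/
def isInterior {d : ℕ} (J : Fin d → ℤ) (α : Fin d → ℤ) : Prop :=
  ∀ i, 0 < α i ∧ α i < J i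

/-- `α` is a grid index: `0 ≤ α i ≤ J i` for all `i`. -/
def isGrid {d : ℕ} (J : Fin d → ℤ) (α : Fin d → ℤ) : Prop :=
  ∀ i, 0 ≤ α i ∧ α i ≤ J i

/-- `α` is a boundary index: a grid index with `α i ∈ {0, J i}` for some `i`. -/
def isBoundary {d : ℕ} (J : Fin d → ℤ) (α : Fin d → ℤ) : Prop :=
  isGrid J α ∧ ∃ i, α i = 0 ∨ α i = J i

instance {d : ℕ} (J α : Fin d → ℤ) : Decidable (isInterior J α) :=
  inferInstanceAs (Decidable (∀ i, 0 < α i ∧ α i < J i))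

instance {d : ℕ} (J α : Fin d → ℤ) : Decidable (isGrid J α) :=
  inferInstanceAs (Decidable (∀ i, 0 ≤ α i ∧ α i ≤ J i))

/-- The grid node `x_α = a + (α₁h₁, …, α_dh_d)`. -/
noncomputable def xpt {d : ℕ} (a h : Fin d → ℝ) (α : Fin d → ℤ) : Fin d → ℝ :=
  fun i => a i + (α i : ℝ) * h i

/-- Second central difference `δᵢ² U_α = (U_{α+eᵢ} − 2U_α + U_{α−eᵢ})/hᵢ²`. -/
noncomputable def delta2 {d : ℕ} (h : Fin d → ℝ) (U : (Fin d → ℤ) → ℝ) (i : Fin d)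
    (α : Fin d → ℤ) : ℝ :=
  (U (α + Pi.single i 1) - 2 * U α + U (α - Pi.single i 1)) / (h i) ^ 2

/-- Central discrete gradient `∇_h U_α`. -/
noncomputable def gradh {d : ℕ} (h : Fin d → ℝ) (U : (Fin d → ℤ) → ℝ) (α : Fin d → ℤ) :
    Fin d → ℝ :=
  fun i => (U (α + Pi.single i 1) - U (α - Pi.single i 1)) / (2 * h i)

/-- Lax-Friedrichs operator
`Ĥ_LF[U]_α = −β Σᵢ hᵢ δᵢ² U_α + H(∇_h U_α, U_α, x_α) + θ U_α`. -/
noncomputable def HLF {d : ℕ} (h : Fin d → ℝ) (H : (Fin d → ℝ) → ℝ → (Fin d → ℝ) → ℝ)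
    (θ β : ℝ) (a : Fin d → ℝ) (U : (Fin d → ℤ) → ℝ) (α : Fin d → ℤ) : ℝ :=
  -β * (∑ i, h i * delta2 h U i α) + H (gradh h U α) (U α) (xpt a h α) + θ * U α

/-! ### Auxiliary lemmas -/

lemma term_est {β L wp wm w M : ℝ} (hL : 0 ≤ L) (hβL : L ≤ 2*β)
    (hwp : wp ≤ M) (hwm : wm ≤ M) :
    β*(wp + wm - 2*w) + L/2 * |wp - wm| ≤ 2*β*(M - w) := by
  rcases abs_cases (wp - wm) with ⟨he, _⟩ | ⟨he, _⟩ <;> rw [he] <;> nlinarith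

lemma sum_est {d : ℕ} (h : Fin d → ℝ) (hh : ∀ i, 0 < h i) {β L : ℝ}
    (hL : 0 ≤ L) (hβL : L ≤ 2*β) (w M : ℝ) (wp wm : Fin d → ℝ)
    (hwp : ∀ i, wp i ≤ M) (hwm : ∀ i, wm i ≤ M) (A : ℝ)
    (hA : |A| ≤ L * ∑ i, |wp i - wm i| / (2 * h i)) :
    β * (∑ i, (wp i - 2*w + wm i)/h i) - A ≤ (2*β*∑ i, (h i)⁻¹) * (M - w) := by
  have h1 : β * (∑ i, (wp i - 2*w + wm i)/h i) - A
      ≤ β * (∑ i, (wp i - 2*w + wm i)/h i) + L * ∑ i, |wp i - wm i| / (2 * h i) := by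
    have := neg_abs_le A
    linarith
  refine h1.trans ?_
  have h2 : β * (∑ i, (wp i - 2*w + wm i)/h i) + L * ∑ i, |wp i - wm i| / (2 * h i)
      = ∑ i, (β*(wp i + wm i - 2*w) + L/2 * |wp i - wm i|) * (h i)⁻¹ := by
    rw [Finset.mul_sum, Finset.mul_sum, ← Finset.sum_add_distrib]
    refine Finset.sum_congr rfl fun i _ => ?_
    have := (hh i).ne'
    field_simp
    ring
  rw [h2]
  have h3 : ∑ i, (β*(wp i + wm i - 2*w) + L/2 * |wp i - wm i|) * (h i)⁻¹
      ≤ ∑ i, (2*β*(M - w)) * (h i)⁻¹ :=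
    Finset.sum_le_sum fun i _ => mul_le_mul_of_nonneg_right
      (term_est hL hβL (hwp i) (hwm i)) (inv_nonneg.2 (hh i).le)
  refine h3.trans_eq ?_
  rw [← Finset.mul_sum]
  ring

lemma key_est {d : ℕ} (h : Fin d → ℝ) (hh : ∀ i, 0 < h i)
    {θ β L Lu lam M K : ℝ} (hL : 0 ≤ L) (hLu : 0 ≤ Lu) (hβL : L ≤ 2*β)
    (hθ : 0 < θ) (hM : 0 ≤ M) (hlam : 0 < lam)
    (hK : K = 2*β*∑ i, (h i)⁻¹)
    (hlam2 : lam * (θ + K + Lu) ≤ 1)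
    (w : ℝ) (wp wm : Fin d → ℝ) (A B : ℝ)
    (hw : |w| ≤ M) (hwp : ∀ i, |wp i| ≤ M) (hwm : ∀ i, |wm i| ≤ M)
    (hA : |A| ≤ L * ∑ i, |wp i - wm i| / (2 * h i))
    (hB : |B| ≤ Lu * |w|) (hB1 : 0 ≤ w → 0 ≤ B) (hB2 : w ≤ 0 → B ≤ 0) :
    |w - lam * (-(β * ∑ i, (wp i - 2*w + wm i)/h i) + A + B + θ*w)| ≤ (1 - lam*θ) * M := by
  have hβ0 : 0 ≤ β := by linarith
  have hK0 : 0 ≤ K := by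
    rw [hK]
    exact mul_nonneg (by linarith) (Finset.sum_nonneg fun i _ => inv_nonneg.2 (hh i).le)
  have hexp : lam*θ + lam*K + lam*Lu ≤ 1 := by nlinarith
  have hc1 : 0 ≤ 1 - lam*θ - lam*K := by nlinarith [mul_nonneg hlam.le hLu]
  have hc3 : 0 ≤ 1 - lam*θ - lam*K - lam*Lu := by linarith
  set S := ∑ i, (wp i - 2*w + wm i)/h i with hS
  have up : β * S - A ≤ K * (M - w) := by
    rw [hK]
    exact sum_est h hh hL hβL w M wp wm (fun i => (abs_le.1 (hwp i)).2)
      (fun i => (abs_le.1 (hwm i)).2) A hA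
  have low : -(K * (M + w)) ≤ β * S - A := by
    have hneg : β * (∑ i, ((fun i => -wp i) i - 2*(-w) + (fun i => -wm i) i)/h i) - (-A)
        ≤ (2*β*∑ i, (h i)⁻¹) * (M - (-w)) := by
      refine sum_est h hh hL hβL (-w) M _ _
        (fun i => by have := (abs_le.1 (hwp i)).1; simp; linarith)
        (fun i => by have := (abs_le.1 (hwm i)).1; simp; linarith) (-A) ?_
      rw [abs_neg]
      refine hA.trans_eq ?_
      congr 1
      refine Finset.sum_congr rfl fun i _ => ?_
      rw [show -wp i - -wm i = -(wp i - wm i) by ring, abs_neg]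
    have hsum : ∑ i, ((fun i => -wp i) i - 2*(-w) + (fun i => -wm i) i)/h i = -S := by
      rw [hS, ← Finset.sum_neg_distrib]
      refine Finset.sum_congr rfl fun i _ => ?_
      ring
    rw [hsum, ← hK] at hneg
    linarith
  have hwM := abs_le.1 hw
  rw [abs_le]
  constructor
  · rcases le_or_gt w 0 with hw0 | hw0
    · have hBn : B ≤ 0 := hB2 hw0
      nlinarith [mul_le_mul_of_nonneg_left low hlam.le,
        mul_nonneg hlam.le (neg_nonneg.2 hBn),
        mul_nonneg hc1 hM, mul_nonneg hc3 (neg_nonneg.2 hw0),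
        mul_nonneg hc3 (by linarith : (0:ℝ) ≤ M + w)]
    · have hBle : B ≤ Lu * w := by
        have := (abs_le.1 hB).2
        rw [abs_of_pos hw0] at this
        linarith
      nlinarith [mul_le_mul_of_nonneg_left low hlam.le,
        mul_le_mul_of_nonneg_left hBle hlam.le,
        mul_nonneg hc1 hM, mul_nonneg hc3 hw0.le]
  · rcases le_or_gt 0 w with hw0 | hw0
    · have hBn : 0 ≤ B := hB1 hw0
      nlinarith [mul_le_mul_of_nonneg_left up hlam.le,
        mul_nonneg hlam.le hBn,
        mul_nonneg hc1 hM, mul_nonneg hc1 (by linarith : (0:ℝ) ≤ M - w)]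
    · have hBge : Lu * w ≤ B := by
        have := (abs_le.1 hB).1
        rw [abs_of_neg hw0] at this
        linarith
      nlinarith [mul_le_mul_of_nonneg_left up hlam.le,
        mul_le_mul_of_nonneg_left hBge hlam.le,
        mul_nonneg hc1 hM, mul_nonneg hc3 (by linarith : (0:ℝ) ≤ -w)]

lemma neighbor_grid {d : ℕ} {J : Fin d → ℤ} {α : Fin d → ℤ} (hi : isInterior J α) (i : Fin d) :
    isGrid J (α + Pi.single i 1) ∧ isGrid J (α - Pi.single i 1) := by
  constructor <;> intro j <;>
  · have h1 := hi j
    simp only [Pi.add_apply, Pi.sub_apply, Pi.single_apply]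
    split_ifs <;> omega

lemma not_interior_of_boundary {d : ℕ} {J : Fin d → ℤ} (hJ : ∀ i, 2 ≤ J i) {α : Fin d → ℤ}
    (hb : isBoundary J α) : ¬ isInterior J α := by
  obtain ⟨-, i, hi⟩ := hb
  intro hint
  have h1 := hint i
  have := hJ i
  omega

/-- extension of a grid function by `0` outside the grid. -/
noncomputable def ExtG {d : ℕ} (G : Finset (Fin d → ℤ)) (V : {x // x ∈ G} → ℝ)
    (α : Fin d → ℤ) : ℝ :=
  if hα : α ∈ G then V ⟨α, hα⟩ else 0

/-- One-sided maximum principle bound for solutions of the scheme. -/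
lemma solution_upper {d : ℕ} (J : Fin d → ℤ) (hJ : ∀ i, 2 ≤ J i)
    (h : Fin d → ℝ) (hh : ∀ i, 0 < h i) (a : Fin d → ℝ)
    (H : (Fin d → ℝ) → ℝ → (Fin d → ℝ) → ℝ) (θ : ℝ) (hθ : 0 < θ) (β : ℝ)
    (g : (Fin d → ℝ) → ℝ) (L : ℝ) (hL : 0 ≤ L) (hβL : L ≤ 2*β)
    (hLip : ∀ (p q : Fin d → ℝ) (v : ℝ) (x : Fin d → ℝ),
      |H p v x - H q v x| ≤ L * ∑ i, |p i - q i|)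
    (hmono : ∀ (p : Fin d → ℝ) (x : Fin d → ℝ), Monotone fun v => H p v x)
    (U : (Fin d → ℤ) → ℝ)
    (hint : ∀ α, isInterior J α → HLF h H θ β a U α = 0)
    (hbd : ∀ α, isBoundary J α → U α = g (xpt a h α)) :
    ∀ α, isGrid J α → U α ≤ max
      (sSup ((fun β' => |g (xpt a h β')|) '' {β' | isBoundary J β'}))
      (θ⁻¹ * sSup ((fun α' => |H 0 0 (xpt a h α')|) '' {α' | isInterior J α'})) := by
  classical
  set G := Fintype.piFinset fun i => Finset.Icc (0:ℤ) (J i) with hG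
  have memG : ∀ α, α ∈ G ↔ isGrid J α := by
    intro α
    simp [hG, Fintype.mem_piFinset, Finset.mem_Icc, isGrid]
  have hGne : G.Nonempty := ⟨fun _ => 0, (memG _).2 fun i => ⟨le_refl _, by linarith [hJ i]⟩⟩
  obtain ⟨α0, hα0G, hmax⟩ := G.exists_max_image U hGne
  have bdd_b : BddAbove ((fun β' => |g (xpt a h β')|) '' {β' | isBoundary J β'}) :=
    (Set.Finite.image _ (Set.Finite.subset G.finite_toSet fun α hα => (memG α).2 hα.1)).bddAbove
  have bdd_i : BddAbove ((fun α' => |H 0 0 (xpt a h α')|) '' {α' | isInterior J α'}) :=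
    (Set.Finite.image _ (Set.Finite.subset G.finite_toSet
      (fun α hα => (memG α).2 fun i => ⟨(hα i).1.le, (hα i).2.le⟩))).bddAbove
  suffices hs : U α0 ≤ max
      (sSup ((fun β' => |g (xpt a h β')|) '' {β' | isBoundary J β'}))
      (θ⁻¹ * sSup ((fun α' => |H 0 0 (xpt a h α')|) '' {α' | isInterior J α'})) by
    intro α hα
    exact (hmax α ((memG α).2 hα)).trans hs
  by_cases hi : isInterior J α0
  · have hSi_mem : |H 0 0 (xpt a h α0)|
        ∈ (fun α' => |H 0 0 (xpt a h α')|) '' {α' | isInterior J α'} := ⟨α0, hi, rfl⟩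
    have hSi_le := le_csSup bdd_i hSi_mem
    have hSi_nonneg : 0 ≤ sSup ((fun α' => |H 0 0 (xpt a h α')|) '' {α' | isInterior J α'}) :=
      le_trans (abs_nonneg _) hSi_le
    rcases le_or_gt (U α0) 0 with hU0 | hU0
    · exact hU0.trans (le_max_of_le_right (mul_nonneg (inv_nonneg.2 hθ.le) hSi_nonneg))
    · have heq := hint α0 hi
      rw [HLF] at heq
      set x0 := xpt a h α0 with hx0
      set wp : Fin d → ℝ := fun i => U (α0 + Pi.single i 1) with hwpdef
      set wm : Fin d → ℝ := fun i => U (α0 - Pi.single i 1) with hwmdef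
      have hsum : ∑ i, h i * delta2 h U i α0 = ∑ i, (wp i - 2*U α0 + wm i)/h i := by
        refine Finset.sum_congr rfl fun i _ => ?_
        have := (hh i).ne'
        simp only [delta2, hwpdef, hwmdef]
        field_simp
      have hwp : ∀ i, wp i ≤ U α0 := fun i =>
        hmax _ ((memG _).2 (neighbor_grid hi i).1)
      have hwm : ∀ i, wm i ≤ U α0 := fun i =>
        hmax _ ((memG _).2 (neighbor_grid hi i).2)
      set A := H (gradh h U α0) (U α0) x0 - H 0 (U α0) x0 with hAdef
      have hA : |A| ≤ L * ∑ i, |wp i - wm i| / (2*h i) := by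
        rw [hAdef]
        refine (hLip _ 0 _ _).trans_eq ?_
        congr 1
        refine Finset.sum_congr rfl fun i _ => ?_
        have h2 : gradh h U α0 i - (0 : Fin d → ℝ) i = (wp i - wm i)/(2*h i) := by
          simp only [gradh, hwpdef, hwmdef, Pi.zero_apply, sub_zero]
        rw [h2, abs_div, abs_of_pos (by linarith [hh i] : (0:ℝ) < 2*h i)]
      have hBmono : H 0 0 x0 ≤ H 0 (U α0) x0 := hmono 0 x0 hU0.le
      have hs_est : β * (∑ i, (wp i - 2*(U α0) + wm i)/h i) - A
          ≤ (2*β*∑ i, (h i)⁻¹) * (U α0 - U α0) :=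
        sum_est h hh hL hβL (U α0) (U α0) wp wm hwp hwm A hA
      have hzero : (2*β*∑ i, (h i)⁻¹) * (U α0 - U α0) = 0 := by ring
      have hθU : θ * U α0 ≤ |H 0 0 x0| := by
        have habs := neg_abs_le (H 0 0 x0)
        rw [hsum] at heq
        linarith
      have hfin : U α0 ≤ θ⁻¹ * sSup ((fun α' => |H 0 0 (xpt a h α')|) '' {α' | isInterior J α'}) := by
        have h3 : θ * U α0 ≤ sSup ((fun α' => |H 0 0 (xpt a h α')|) '' {α' | isInterior J α'}) :=
          hθU.trans hSi_le
        calc U α0 = θ⁻¹ * (θ * U α0) := by field_simp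
          _ ≤ _ := mul_le_mul_of_nonneg_left h3 (inv_nonneg.2 hθ.le)
      exact le_max_of_le_right hfin
  · have hb : isBoundary J α0 := by
      refine ⟨(memG _).1 hα0G, ?_⟩
      by_contra hc
      push_neg at hc
      apply hi
      intro i
      have hg := (memG _).1 hα0G i
      have := hc i
      omega
    calc U α0 = g (xpt a h α0) := hbd α0 hb
      _ ≤ |g (xpt a h α0)| := le_abs_self _
      _ ≤ sSup ((fun β' => |g (xpt a h β')|) '' {β' | isBoundary J β'}) :=
          le_csSup bdd_b ⟨α0, hb, rfl⟩
      _ ≤ _ := le_max_left _ _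

lemma HLF_neg {d : ℕ} (h : Fin d → ℝ) (H : (Fin d → ℝ) → ℝ → (Fin d → ℝ) → ℝ)
    (θ β : ℝ) (a : Fin d → ℝ) (U : (Fin d → ℤ) → ℝ) (α : Fin d → ℤ) :
    HLF h (fun p u x => -H (-p) (-u) x) θ β a (fun z => -U z) α = -HLF h H θ β a U α := by
  simp only [HLF]
  have h1 : ∑ i, h i * delta2 h (fun z => -U z) i α = -∑ i, h i * delta2 h U i α := by
    rw [← Finset.sum_neg_distrib]
    refine Finset.sum_congr rfl fun i _ => ?_
    simp only [delta2]
    ring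
  have h2 : -gradh h (fun z => -U z) α = gradh h U α := by
    funext i
    simp only [gradh, Pi.neg_apply]
    ring
  rw [h1, h2, neg_neg]
  ring
/-- Admissibility and uniform stability of the Lax-Friedrichs scheme: if `H` is
continuous, ℓ¹-Lipschitz in `p` with constant `L`, Lipschitz in `u`, nondecreasing
in `u`, `θ > 0`, and `β ≥ L/2`, then the scheme has a solution `U` with
`|U_α| ≤ max(max_{boundary} |g|, θ⁻¹ max_{interior} |H(0,0,x)|)`. -/
theorem lax_friedrichs_admissible_stable {d : ℕ} (hd : 0 < d)
    (J : Fin d → ℤ) (hJ : ∀ i, 2 ≤ J i)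
    (h : Fin d → ℝ) (hh : ∀ i, 0 < h i) (a : Fin d → ℝ)
    (H : (Fin d → ℝ) → ℝ → (Fin d → ℝ) → ℝ)
    (θ : ℝ) (hθ : 0 < θ) (β : ℝ) (g : (Fin d → ℝ) → ℝ)
    (L Lu : ℝ)
    (hcont : Continuous fun z : (Fin d → ℝ) × ℝ × (Fin d → ℝ) => H z.1 z.2.1 z.2.2)
    (hLip : ∀ (p q : Fin d → ℝ) (v : ℝ) (x : Fin d → ℝ),
      |H p v x - H q v x| ≤ L * ∑ i, |p i - q i|)
    (hLipu : ∀ (p : Fin d → ℝ) (v w : ℝ) (x : Fin d → ℝ),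
      |H p v x - H p w x| ≤ Lu * |v - w|)
    (hmono : ∀ (p : Fin d → ℝ) (x : Fin d → ℝ), Monotone fun v => H p v x)
    (hβ : L / 2 ≤ β) :
    ∃ U : (Fin d → ℤ) → ℝ,
      (∀ α, isInterior J α → HLF h H θ β a U α = 0) ∧
      (∀ α, isBoundary J α → U α = g (xpt a h α)) ∧
      (∀ α, isGrid J α → |U α| ≤ max
        (sSup ((fun β' => |g (xpt a h β')|) '' {β' | isBoundary J β'}))
        (θ⁻¹ * sSup ((fun α' => |H 0 0 (xpt a h α')|) '' {α' | isInterior J α'}))) := by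
  classical
  -- nonnegativity of the Lipschitz constants
  have hL0 : 0 ≤ L := by
    have h1 := hLip (fun _ => 1) 0 0 0
    have h2 : ∑ i : Fin d, |(fun _ => (1:ℝ)) i - (0 : Fin d → ℝ) i| = (d : ℝ) := by
      simp
    rw [h2] at h1
    by_contra hc
    push_neg at hc
    have hd' : (0:ℝ) < d := by exact_mod_cast hd
    nlinarith [abs_nonneg (H (fun _ => 1) 0 0 - H 0 0 0)]
  have hLu0 : 0 ≤ Lu := by
    have h1 := hLipu 0 1 0 0
    rw [show |(1:ℝ) - 0| = 1 by norm_num, mul_one] at h1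
    linarith [abs_nonneg (H 0 1 0 - H 0 0 0)]
  have hβL : L ≤ 2*β := by linarith
  have hβ0 : 0 ≤ β := by linarith
  set K := 2*β*∑ i, (h i)⁻¹ with hKdef
  have hK0 : 0 ≤ K := by
    rw [hKdef]
    exact mul_nonneg (by linarith) (Finset.sum_nonneg fun i _ => inv_nonneg.2 (hh i).le)
  set lam := (θ + K + Lu + 1)⁻¹ with hlamdef
  have hden : 0 < θ + K + Lu + 1 := by linarith
  have hlam : 0 < lam := inv_pos.2 hden
  have hlam2 : lam * (θ + K + Lu) ≤ 1 := by
    calc lam * (θ + K + Lu) ≤ lam * (θ + K + Lu + 1) :=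
          mul_le_mul_of_nonneg_left (by linarith) hlam.le
      _ = 1 := by rw [hlamdef]; exact inv_mul_cancel₀ hden.ne'
  have hmθ : 0 ≤ 1 - lam*θ := by nlinarith [mul_nonneg hlam.le hK0, mul_nonneg hlam.le hLu0]
  set G := Fintype.piFinset fun i => Finset.Icc (0:ℤ) (J i) with hG
  have memG : ∀ α, α ∈ G ↔ isGrid J α := by
    intro α
    simp [hG, Fintype.mem_piFinset, Finset.mem_Icc, isGrid]
  -- the contraction map
  set T : ({x // x ∈ G} → ℝ) → ({x // x ∈ G} → ℝ) := fun V b =>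
    if isInterior J b.1 then ExtG G V b.1 - lam * HLF h H θ β a (ExtG G V) b.1
    else g (xpt a h b.1) with hT
  have hExtdiff : ∀ V W : {x // x ∈ G} → ℝ, ∀ z, |ExtG G V z - ExtG G W z| ≤ dist V W := by
    intro V W z
    by_cases hz : z ∈ G
    · simp only [ExtG, dif_pos hz]
      rw [← Real.dist_eq]
      exact dist_le_pi_dist V W ⟨z, hz⟩
    · simp only [ExtG, dif_neg hz, sub_zero, abs_zero]
      exact dist_nonneg
  have hTlip : ∀ V W, dist (T V) (T W) ≤ (1 - lam*θ) * dist V W := by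
    intro V W
    rw [dist_pi_le_iff (mul_nonneg hmθ dist_nonneg)]
    intro b
    by_cases hib : isInterior J b.1
    · rw [Real.dist_eq]
      simp only [hT, if_pos hib]
      set α := b.1 with hα
      set UV := ExtG G V with hUV
      set UW := ExtG G W with hUW
      set w := UV α - UW α with hwdef
      set wp : Fin d → ℝ := fun i => UV (α + Pi.single i 1) - UW (α + Pi.single i 1) with hwpdef
      set wm : Fin d → ℝ := fun i => UV (α - Pi.single i 1) - UW (α - Pi.single i 1) with hwmdef
      set A := H (gradh h UV α) (UV α) (xpt a h α)
        - H (gradh h UW α) (UV α) (xpt a h α) with hAdef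
      set B := H (gradh h UW α) (UV α) (xpt a h α)
        - H (gradh h UW α) (UW α) (xpt a h α) with hBdef
      have hsum : ∑ i, h i * delta2 h UV i α - ∑ i, h i * delta2 h UW i α
          = ∑ i, (wp i - 2*w + wm i)/h i := by
        rw [← Finset.sum_sub_distrib]
        refine Finset.sum_congr rfl fun i _ => ?_
        have := (hh i).ne'
        simp only [delta2, hwpdef, hwmdef, hwdef]
        field_simp
        ring
      have hkey : (ExtG G V α - lam * HLF h H θ β a (ExtG G V) α)
          - (ExtG G W α - lam * HLF h H θ β a (ExtG G W) α)
          = w - lam * (-(β * ∑ i, (wp i - 2*w + wm i)/h i) + A + B + θ*w) := by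
        simp only [HLF, ← hUV, ← hUW]
        linear_combination (lam*β) * hsum + lam * hAdef + lam * hBdef - (1 - lam*θ) * hwdef
      rw [hkey]
      refine key_est h hh hL0 hLu0 hβL hθ dist_nonneg hlam hKdef hlam2 w wp wm A B
        (by rw [hwdef]; exact hExtdiff V W α)
        (fun i => by rw [hwpdef]; exact hExtdiff V W _)
        (fun i => by rw [hwmdef]; exact hExtdiff V W _)
        ?_ ?_ ?_ ?_
      · rw [hAdef]
        refine (hLip _ _ _ _).trans_eq ?_
        congr 1
        refine Finset.sum_congr rfl fun i _ => ?_
        have h2 : gradh h UV α i - gradh h UW α i = (wp i - wm i)/(2*h i) := by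
          have := (hh i).ne'
          simp only [gradh, hwpdef, hwmdef]
          field_simp
          ring
        rw [h2, abs_div, abs_of_pos (by linarith [hh i] : (0:ℝ) < 2*h i)]
      · rw [hBdef, hwdef]
        exact hLipu _ _ _ _
      · intro h0
        rw [hBdef]
        have : UW α ≤ UV α := by rw [hwdef] at h0; linarith
        exact sub_nonneg.2 (hmono _ _ this)
      · intro h0
        rw [hBdef]
        have : UV α ≤ UW α := by rw [hwdef] at h0; linarith
        exact sub_nonpos.2 (hmono _ _ this)
    · simp only [hT, if_neg hib]
      rw [dist_self]
      exact mul_nonneg hmθ dist_nonneg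
  have hC : ContractingWith (Real.toNNReal (1 - lam*θ)) T := by
    constructor
    · exact Real.toNNReal_lt_one.2 (by nlinarith [mul_pos hlam hθ])
    · refine LipschitzWith.of_dist_le_mul fun V W => ?_
      rw [Real.coe_toNNReal _ hmθ]
      exact hTlip V W
  set V0 := ContractingWith.fixedPoint T hC with hV0
  have hfix : T V0 = V0 := hC.fixedPoint_isFixedPt
  -- the solution
  have hint : ∀ α, isInterior J α → HLF h H θ β a (ExtG G V0) α = 0 := by
    intro α hα
    have hαG : α ∈ G := (memG α).2 fun i => ⟨(hα i).1.le, (hα i).2.le⟩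
    have heq := congrFun hfix ⟨α, hαG⟩
    simp only [hT, if_pos hα] at heq
    have hE : ExtG G V0 α = V0 ⟨α, hαG⟩ := dif_pos hαG
    rw [hE] at heq
    have hz : lam * HLF h H θ β a (ExtG G V0) α = 0 := by linarith
    rcases mul_eq_zero.1 hz with h1 | h1
    · exact absurd h1 hlam.ne'
    · exact h1
  have hbd : ∀ α, isBoundary J α → ExtG G V0 α = g (xpt a h α) := by
    intro α hα
    have hαG : α ∈ G := (memG α).2 hα.1
    have hni : ¬ isInterior J α := not_interior_of_boundary hJ hα
    have heq := congrFun hfix ⟨α, hαG⟩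
    simp only [hT, if_neg hni] at heq
    have hE : ExtG G V0 α = V0 ⟨α, hαG⟩ := dif_pos hαG
    rw [hE, ← heq]
  refine ⟨ExtG G V0, hint, hbd, ?_⟩
  intro α hα
  have hup := solution_upper J hJ h hh a H θ hθ β g L hL0 hβL hLip hmono
    (ExtG G V0) hint hbd α hα
  -- lower bound via the negated Hamiltonian
  set H' : (Fin d → ℝ) → ℝ → (Fin d → ℝ) → ℝ := fun p u x => -H (-p) (-u) x with hH'
  have hLip' : ∀ (p q : Fin d → ℝ) (v : ℝ) (x : Fin d → ℝ),
      |H' p v x - H' q v x| ≤ L * ∑ i, |p i - q i| := by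
    intro p q v x
    have h1 := hLip (-p) (-q) (-v) x
    simp only [hH']
    rw [show -H (-p) (-v) x - -H (-q) (-v) x = -(H (-p) (-v) x - H (-q) (-v) x) by ring,
      abs_neg]
    refine h1.trans_eq ?_
    congr 1
    refine Finset.sum_congr rfl fun i _ => ?_
    rw [show (-p) i - (-q) i = -(p i - q i) by simp [Pi.neg_apply]; ring, abs_neg]
  have hmono' : ∀ (p : Fin d → ℝ) (x : Fin d → ℝ), Monotone fun v => H' p v x := by
    intro p x u v huv
    simp only [hH']
    exact neg_le_neg (hmono (-p) x (neg_le_neg huv))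
  have hint' : ∀ α', isInterior J α' → HLF h H' θ β a (fun z => -(ExtG G V0 z)) α' = 0 := by
    intro α' hα'
    rw [hH', HLF_neg, hint α' hα', neg_zero]
  have hbd' : ∀ α', isBoundary J α' →
      (fun z => -(ExtG G V0 z)) α' = (fun x => -g x) (xpt a h α') := by
    intro α' hα'
    simp only
    rw [hbd α' hα']
  have hlow := solution_upper J hJ h hh a H' θ hθ β (fun x => -g x) L hL0 hβL hLip' hmono'
    (fun z => -(ExtG G V0 z)) hint' hbd' α hα
  have e1 : (fun β' : Fin d → ℤ => |(fun x => -g x) (xpt a h β')|)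
      = fun β' : Fin d → ℤ => |g (xpt a h β')| := funext fun β' => abs_neg _
  have e2 : (fun α' : Fin d → ℤ => |H' 0 0 (xpt a h α')|)
      = fun α' : Fin d → ℤ => |H 0 0 (xpt a h α')| := by
    funext α'
    simp only [hH', neg_zero, abs_neg]
  rw [e1, e2] at hlow
  exact abs_le.2 ⟨by linarith, hup⟩
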